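/- arXiv:1805.07081 — 4 statements merged into one kernel-verified Lean document; each statement's English description precedes it below -/
import Mathlib

section
/- Let k be a commutative ring, G a group, N a normal subgroup of G, H a subgroup of G, and M a k[H]-module. Then N ∩ H is a normal subgroup of H, the coinvariants M_{N∩H} carry a natural k[H/(N∩H)]-module structure, the quotient H/(N∩H) embeds canonically as a subgroup of G/N, and there is a natural isomorphism of k[G/N]-modules (k[G] ⊗_{k[H]} M)_N ≅ k[G/N] ⊗_{k[H/(N∩H)]} M_{N∩H}, where the N-coinvariants of the induced module are endowed with their natural k[G/N]-module structure. -/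
/-!
The forward map sends `[[x ⊗ m]]` to `[x̄ ⊗ m̄]`, where `x̄` is the image of `x` under
`k[G] → k[G/N]`. For the inverse, note that the `G`-action on `(k[G] ⊗_{k[H]} M)_N` factors
through a representation `ρ` of `G/N`; send `x ⊗ m̄` to `ρ(x) [[1 ⊗ m]]`. This respects the
balancing relations over `H/(N ∩ H)` because `ρ(h̄) [[1 ⊗ m]] = [[h ⊗ m]] = [[1 ⊗ h m]]`, and
both composites fix the generators `[[g ⊗ m]]` and `[ḡ ⊗ m̄]`.
-/

set_option linter.unusedSectionVars false

open scoped TensorProduct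

noncomputable section

variable (k : Type*) [CommRing k] (G : Type*) [Group G] (N : Subgroup G) [N.Normal]
  (H : Subgroup G)
  (M : Type*) [AddCommGroup M] [Module k M] [Module (MonoidAlgebra k H) M]
  [IsScalarTower k (MonoidAlgebra k H) M] [SMulCommClass (MonoidAlgebra k H) k M]

/-- The submodule of `k[G] ⊗_k M` of balancing relations over `k[H]`:
`(x·h) ⊗ m - x ⊗ (h·m)`. Quotienting by it yields `k[G] ⊗_{k[H]} M`. -/
def balancedRel : Submodule k (MonoidAlgebra k G ⊗[k] M) :=
  Submodule.span k
    { z | ∃ (x : MonoidAlgebra k G) (h : H) (m : M),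
        z = (x * MonoidAlgebra.of k G (h : G)) ⊗ₜ[k] m -
          x ⊗ₜ[k] (MonoidAlgebra.of k H h • m) }

/-- The induced module `Ind_H^G M = k[G] ⊗_{k[H]} M`. -/
abbrev Induced : Type _ :=
  (MonoidAlgebra k G ⊗[k] M) ⧸ balancedRel k G H M

theorem balancedRel_le_comap_lmul (g : G) :
    balancedRel k G H M ≤
      (balancedRel k G H M).comap
        ((LinearMap.mulLeft k (MonoidAlgebra.of k G g)).rTensor M) := by
  rw [balancedRel, Submodule.span_le]
  rintro z ⟨x, h, m, rfl⟩
  simp only [SetLike.mem_coe, Submodule.mem_comap, map_sub, LinearMap.rTensor_tmul,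
    LinearMap.mulLeft_apply]
  rw [← mul_assoc]
  exact Submodule.subset_span ⟨MonoidAlgebra.of k G g * x, h, m, rfl⟩

/-- The action of `g ∈ G` on `Ind_H^G M` by left multiplication on the first factor. -/
def indSmul (g : G) : Induced k G H M →ₗ[k] Induced k G H M :=
  Submodule.mapQ _ _ ((LinearMap.mulLeft k (MonoidAlgebra.of k G g)).rTensor M)
    (balancedRel_le_comap_lmul k G H M g)

theorem indSmul_indSmul (a b : G) (w : Induced k G H M) :
    indSmul k G H M a (indSmul k G H M b w) = indSmul k G H M (a * b) w := by
  obtain ⟨x, rfl⟩ := Submodule.Quotient.mk_surjective _ w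
  have hm : (LinearMap.mulLeft k (MonoidAlgebra.of k G a)).comp
      (LinearMap.mulLeft k (MonoidAlgebra.of k G b)) =
      LinearMap.mulLeft k (MonoidAlgebra.of k G (a * b)) := by
    ext y
    simp only [LinearMap.coe_comp, Function.comp_apply, LinearMap.mulLeft_apply, map_mul,
      mul_assoc]
  simp only [indSmul, Submodule.mapQ_apply]
  rw [← hm, LinearMap.rTensor_comp, LinearMap.comp_apply]

/-- The submodule of `Ind_H^G M` generated by the elements `n·z - z` for `n ∈ N`:
the quotient by it is the module of `N`-coinvariants of `Ind_H^G M`. -/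
def indCoinvRelN : Submodule k (Induced k G H M) :=
  Submodule.span k
    { z | ∃ (n : N) (w : Induced k G H M), z = indSmul k G H M (n : G) w - w }

theorem indCoinvRelN_le_comap (g : G) :
    indCoinvRelN k G N H M ≤ (indCoinvRelN k G N H M).comap (indSmul k G H M g) := by
  rw [indCoinvRelN, Submodule.span_le]
  rintro z ⟨n, w, rfl⟩
  simp only [SetLike.mem_coe, Submodule.mem_comap, map_sub]
  have h1 : indSmul k G H M g (indSmul k G H M (n : G) w) =
      indSmul k G H M (g * (n : G) * g⁻¹) (indSmul k G H M g w) := by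
    rw [indSmul_indSmul, indSmul_indSmul]
    congr 1
    group
  rw [h1]
  exact Submodule.subset_span
    ⟨⟨g * (n : G) * g⁻¹, ‹N.Normal›.conj_mem (n : G) n.2 g⟩, indSmul k G H M g w, rfl⟩

/-- The `N`-coinvariants of the induced module `Ind_H^G M`. -/
abbrev CoinvInduced : Type _ :=
  Induced k G H M ⧸ indCoinvRelN k G N H M

/-- The action of `g ∈ G` on the `N`-coinvariants of `Ind_H^G M`; since `N` is normal,
it factors through `G/N` and gives the natural `k[G/N]`-module structure. -/
def lhsSmul (g : G) : CoinvInduced k G N H M →ₗ[k] CoinvInduced k G N H M :=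
  Submodule.mapQ _ _ (indSmul k G H M g) (indCoinvRelN_le_comap k G N H M g)

/-- The action of `h ∈ H` on `M`, as a `k`-linear map. -/
def mAct (h : H) : M →ₗ[k] M where
  toFun m := MonoidAlgebra.of k H h • m
  map_add' m₁ m₂ := smul_add _ m₁ m₂
  map_smul' c m := smul_comm _ c m

@[simp] theorem mAct_apply (h : H) (m : M) :
    mAct k G H M h m = MonoidAlgebra.of k H h • m := rfl

/-- The submodule of `M` generated by the elements `h·m - m` for `h ∈ N ∩ H`: the
quotient by it is the module of `(N ∩ H)`-coinvariants of `M`. -/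
def mCoinvRel : Submodule k M :=
  Submodule.span k
    { z | ∃ (h : H) (_ : (h : G) ∈ N) (m : M), z = MonoidAlgebra.of k H h • m - m }

theorem mCoinvRel_le_comap (h : H) :
    mCoinvRel k G N H M ≤ (mCoinvRel k G N H M).comap (mAct k G H M h) := by
  rw [mCoinvRel, Submodule.span_le]
  rintro z ⟨h', hh', m, rfl⟩
  simp only [SetLike.mem_coe, Submodule.mem_comap, map_sub, mAct_apply]
  have h1 : MonoidAlgebra.of k H h • (MonoidAlgebra.of k H h' • m) =
      MonoidAlgebra.of k H (h * h' * h⁻¹) • (MonoidAlgebra.of k H h • m) := by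
    rw [← mul_smul, ← mul_smul, ← map_mul, ← map_mul]
    congr 2
    group
  rw [h1]
  refine Submodule.subset_span ⟨h * h' * h⁻¹, ?_, MonoidAlgebra.of k H h • m, rfl⟩
  have : ((h * h' * h⁻¹ : H) : G) = (h : G) * (h' : G) * (h : G)⁻¹ := by push_cast; rfl
  rw [this]
  exact ‹N.Normal›.conj_mem (h' : G) hh' (h : G)

/-- The `(N ∩ H)`-coinvariants of `M`. -/
abbrev MCoinv : Type _ :=
  M ⧸ mCoinvRel k G N H M

/-- The action of `h ∈ H` on the `(N ∩ H)`-coinvariants of `M`; it factors through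
`H/(N ∩ H)` and gives the natural `k[H/(N ∩ H)]`-module structure. -/
def mActQ (h : H) : MCoinv k G N H M →ₗ[k] MCoinv k G N H M :=
  Submodule.mapQ _ _ (mAct k G H M h) (mCoinvRel_le_comap k G N H M h)

/-- The balancing relations in `k[G/N] ⊗_k M_{N∩H}` over `k[H/(N∩H)]`, where
`H/(N∩H)` is viewed inside `G/N`: quotienting yields `k[G/N] ⊗_{k[H/(N∩H)]} M_{N∩H}`. -/
def rhsRel : Submodule k (MonoidAlgebra k (G ⧸ N) ⊗[k] MCoinv k G N H M) :=
  Submodule.span k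
    { z | ∃ (x : MonoidAlgebra k (G ⧸ N)) (h : H) (m : MCoinv k G N H M),
        z = (x * MonoidAlgebra.of k (G ⧸ N) (((h : G) : G ⧸ N))) ⊗ₜ[k] m -
          x ⊗ₜ[k] (mActQ k G N H M h m) }

/-- The induced module `k[G/N] ⊗_{k[H/(N∩H)]} M_{N∩H}`. -/
abbrev RhsInduced : Type _ :=
  (MonoidAlgebra k (G ⧸ N) ⊗[k] MCoinv k G N H M) ⧸ rhsRel k G N H M

theorem rhsRel_le_comap_lmul (g : G) :
    rhsRel k G N H M ≤
      (rhsRel k G N H M).comap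
        ((LinearMap.mulLeft k (MonoidAlgebra.of k (G ⧸ N) ((g : G ⧸ N)))).rTensor
          (MCoinv k G N H M)) := by
  rw [rhsRel, Submodule.span_le]
  rintro z ⟨x, h, m, rfl⟩
  simp only [SetLike.mem_coe, Submodule.mem_comap, map_sub, LinearMap.rTensor_tmul,
    LinearMap.mulLeft_apply]
  rw [← mul_assoc]
  exact Submodule.subset_span
    ⟨MonoidAlgebra.of k (G ⧸ N) ((g : G ⧸ N)) * x, h, m, rfl⟩

/-- The action of `g ∈ G` on `k[G/N] ⊗_{k[H/(N∩H)]} M_{N∩H}` by left multiplication by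
the class of `g` on the first factor; this is the natural `k[G/N]`-module structure. -/
def rhsSmul (g : G) : RhsInduced k G N H M →ₗ[k] RhsInduced k G N H M :=
  Submodule.mapQ _ _
    ((LinearMap.mulLeft k (MonoidAlgebra.of k (G ⧸ N) ((g : G ⧸ N)))).rTensor
      (MCoinv k G N H M))
    (rhsRel_le_comap_lmul k G N H M g)

theorem QuotientGroup.map_comap_injective {G' : Type*} [Group G'] (f : G' →* G) :
    Function.Injective (QuotientGroup.map (N.comap f) N f le_rfl) :=
  (QuotientGroup.injective_lift_iff _ _ _).2 <| by ext; simp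

theorem indSmul_mk_tmul (g : G) (x : MonoidAlgebra k G) (m : M) :
    indSmul k G H M g (Submodule.Quotient.mk (x ⊗ₜ m)) =
      Submodule.Quotient.mk ((MonoidAlgebra.of k G g * x) ⊗ₜ m) :=
  rfl

theorem Induced.mk_mul_of_tmul (x : MonoidAlgebra k G) (h : H) (m : M) :
    (Submodule.Quotient.mk ((x * MonoidAlgebra.of k G h) ⊗ₜ m) : Induced k G H M) =
      Submodule.Quotient.mk (x ⊗ₜ (MonoidAlgebra.of k H h • m)) :=
  (Submodule.Quotient.eq _).2 <| Submodule.subset_span ⟨x, h, m, rfl⟩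

theorem lhsSmul_mk (g : G) (w : Induced k G H M) :
    lhsSmul k G N H M g (Submodule.Quotient.mk w) =
      Submodule.Quotient.mk (indSmul k G H M g w) :=
  rfl

theorem lhsSmul_mul (a b : G) :
    lhsSmul k G N H M (a * b) = lhsSmul k G N H M a ∘ₗ lhsSmul k G N H M b := by
  ext w
  simp [lhsSmul_mk, indSmul_indSmul]

theorem lhsSmul_of_mem {n : G} (hn : n ∈ N) : lhsSmul k G N H M n = LinearMap.id := by
  ext w
  exact (Submodule.Quotient.eq _).2 <| Submodule.subset_span ⟨⟨n, hn⟩, _, rfl⟩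

def coinvInducedRep : G ⧸ N →* Module.End k (CoinvInduced k G N H M) :=
  QuotientGroup.lift N
    { toFun := lhsSmul k G N H M
      map_one' := lhsSmul_of_mem k G N H M N.one_mem
      map_mul' := lhsSmul_mul k G N H M }
    fun _ hn => lhsSmul_of_mem k G N H M hn

theorem coinvInducedRep_mk (g : G) :
    coinvInducedRep k G N H M (g : G ⧸ N) = lhsSmul k G N H M g :=
  rfl

def oneTmul : M →ₗ[k] CoinvInduced k G N H M :=
  (indCoinvRelN k G N H M).mkQ ∘ₗ (balancedRel k G H M).mkQ ∘ₗ
    TensorProduct.mk k (MonoidAlgebra k G) M 1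

theorem lhsSmul_oneTmul (g : G) (m : M) :
    lhsSmul k G N H M g (oneTmul k G N H M m) =
      Submodule.Quotient.mk (Submodule.Quotient.mk (MonoidAlgebra.of k G g ⊗ₜ m)) := by
  simp [oneTmul, lhsSmul_mk, indSmul_mk_tmul]

theorem oneTmul_smul (h : H) (m : M) :
    oneTmul k G N H M (MonoidAlgebra.of k H h • m) =
      lhsSmul k G N H M h (oneTmul k G N H M m) := by
  rw [lhsSmul_oneTmul, ← one_mul (MonoidAlgebra.of k G h), Induced.mk_mul_of_tmul]
  rfl

def oneTmulCoinv : MCoinv k G N H M →ₗ[k] CoinvInduced k G N H M :=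
  (mCoinvRel k G N H M).liftQ (oneTmul k G N H M) <| by
    rw [mCoinvRel, Submodule.span_le]
    rintro _ ⟨h, hN, m, rfl⟩
    rw [SetLike.mem_coe, LinearMap.mem_ker, map_sub, sub_eq_zero, oneTmul_smul,
      lhsSmul_of_mem k G N H M hN, LinearMap.id_apply]

theorem oneTmulCoinv_mk (m : M) :
    oneTmulCoinv k G N H M (Submodule.Quotient.mk m) = oneTmul k G N H M m :=
  rfl

theorem coinvInducedRep_oneTmulCoinv (h : H) (m : MCoinv k G N H M) :
    coinvInducedRep k G N H M ((h : G) : G ⧸ N) (oneTmulCoinv k G N H M m) =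
      oneTmulCoinv k G N H M (mActQ k G N H M h m) := by
  obtain ⟨m, rfl⟩ := Submodule.Quotient.mk_surjective _ m
  rw [coinvInducedRep_mk, oneTmulCoinv_mk, ← oneTmul_smul]
  rfl

def rhsToCoinvInduced : RhsInduced k G N H M →ₗ[k] CoinvInduced k G N H M :=
  (rhsRel k G N H M).liftQ
    (TensorProduct.lift <| LinearMap.lcomp k _ (oneTmulCoinv k G N H M) ∘ₗ
      (MonoidAlgebra.lift k (Module.End k (CoinvInduced k G N H M)) (G ⧸ N)
        (coinvInducedRep k G N H M)).toLinearMap) <| by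
    rw [rhsRel, Submodule.span_le]
    rintro _ ⟨x, h, m, rfl⟩
    simp [Module.End.mul_apply, coinvInducedRep_oneTmulCoinv]

theorem rhsToCoinvInduced_mk_of_tmul (g : G) (m : M) :
    rhsToCoinvInduced k G N H M (Submodule.Quotient.mk
        (MonoidAlgebra.of k (G ⧸ N) (g : G ⧸ N) ⊗ₜ Submodule.Quotient.mk m)) =
      Submodule.Quotient.mk (Submodule.Quotient.mk (MonoidAlgebra.of k G g ⊗ₜ m)) := by
  simp [rhsToCoinvInduced, coinvInducedRep_mk, oneTmulCoinv_mk, lhsSmul_oneTmul]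

theorem rhsSmul_mk_tmul (g : G) (x : MonoidAlgebra k (G ⧸ N)) (m : MCoinv k G N H M) :
    rhsSmul k G N H M g (Submodule.Quotient.mk (x ⊗ₜ m)) =
      Submodule.Quotient.mk ((MonoidAlgebra.of k (G ⧸ N) (g : G ⧸ N) * x) ⊗ₜ m) :=
  rfl

theorem rhsSmul_of_mem {n : G} (hn : n ∈ N) : rhsSmul k G N H M n = LinearMap.id := by
  have hn1 : MonoidAlgebra.of k (G ⧸ N) (n : G ⧸ N) = 1 := by
    rw [(QuotientGroup.eq_one_iff n).2 hn, map_one]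
  ext x m
  simp [rhsSmul_mk_tmul, hn1]

theorem mapDomainAlgHom_mk'_of (g : G) :
    MonoidAlgebra.mapDomainAlgHom k k (QuotientGroup.mk' N) (MonoidAlgebra.of k G g) =
      MonoidAlgebra.of k (G ⧸ N) (g : G ⧸ N) :=
  MonoidAlgebra.mapDomain_single

def inducedToRhs : Induced k G H M →ₗ[k] RhsInduced k G N H M :=
  (balancedRel k G H M).liftQ
    ((rhsRel k G N H M).mkQ ∘ₗ
      TensorProduct.map (MonoidAlgebra.mapDomainAlgHom k k (QuotientGroup.mk' N)).toLinearMap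
        (mCoinvRel k G N H M).mkQ) <| by
    rw [balancedRel, Submodule.span_le]
    rintro _ ⟨x, h, m, rfl⟩
    rw [SetLike.mem_coe, LinearMap.mem_ker, LinearMap.comp_apply, Submodule.mkQ_apply,
      Submodule.Quotient.mk_eq_zero, map_sub, TensorProduct.map_tmul, TensorProduct.map_tmul,
      AlgHom.toLinearMap_apply, AlgHom.toLinearMap_apply, map_mul, mapDomainAlgHom_mk'_of]
    exact Submodule.subset_span ⟨_, h, _, rfl⟩

theorem inducedToRhs_mk_tmul (x : MonoidAlgebra k G) (m : M) :
    inducedToRhs k G N H M (Submodule.Quotient.mk (x ⊗ₜ m)) =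
      Submodule.Quotient.mk
        (MonoidAlgebra.mapDomainAlgHom k k (QuotientGroup.mk' N) x ⊗ₜ Submodule.Quotient.mk m) :=
  rfl

theorem inducedToRhs_indSmul (g : G) (w : Induced k G H M) :
    inducedToRhs k G N H M (indSmul k G H M g w) =
      rhsSmul k G N H M g (inducedToRhs k G N H M w) := by
  obtain ⟨t, rfl⟩ := Submodule.Quotient.mk_surjective _ w
  induction t using TensorProduct.induction_on with
  | zero => simp
  | tmul x m =>
    rw [indSmul_mk_tmul, inducedToRhs_mk_tmul, inducedToRhs_mk_tmul, rhsSmul_mk_tmul, map_mul,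
      mapDomainAlgHom_mk'_of]
  | add a b ha hb => simp only [Submodule.Quotient.mk_add, map_add, ha, hb]

def coinvInducedToRhs : CoinvInduced k G N H M →ₗ[k] RhsInduced k G N H M :=
  (indCoinvRelN k G N H M).liftQ (inducedToRhs k G N H M) <| by
    rw [indCoinvRelN, Submodule.span_le]
    rintro _ ⟨n, w, rfl⟩
    rw [SetLike.mem_coe, LinearMap.mem_ker, map_sub, sub_eq_zero, inducedToRhs_indSmul,
      rhsSmul_of_mem k G N H M n.2, LinearMap.id_apply]

theorem coinvInducedToRhs_lhsSmul (g : G) (z : CoinvInduced k G N H M) :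
    coinvInducedToRhs k G N H M (lhsSmul k G N H M g z) =
      rhsSmul k G N H M g (coinvInducedToRhs k G N H M z) := by
  obtain ⟨w, rfl⟩ := Submodule.Quotient.mk_surjective _ z
  exact inducedToRhs_indSmul k G N H M g w

theorem coinvInducedToRhs_mk_of_tmul (g : G) (m : M) :
    coinvInducedToRhs k G N H M
        (Submodule.Quotient.mk (Submodule.Quotient.mk (MonoidAlgebra.of k G g ⊗ₜ m))) =
      Submodule.Quotient.mk
        (MonoidAlgebra.of k (G ⧸ N) (g : G ⧸ N) ⊗ₜ Submodule.Quotient.mk m) := by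
  rw [← mapDomainAlgHom_mk'_of]
  rfl

theorem coinvInducedToRhs_comp_rhsToCoinvInduced :
    coinvInducedToRhs k G N H M ∘ₗ rhsToCoinvInduced k G N H M = LinearMap.id := by
  ext q m
  obtain ⟨g, rfl⟩ := QuotientGroup.mk_surjective q
  simp [← MonoidAlgebra.of_apply, rhsToCoinvInduced_mk_of_tmul, coinvInducedToRhs_mk_of_tmul]

theorem rhsToCoinvInduced_comp_coinvInducedToRhs :
    rhsToCoinvInduced k G N H M ∘ₗ coinvInducedToRhs k G N H M = LinearMap.id := by
  ext g m
  simp [← MonoidAlgebra.of_apply, rhsToCoinvInduced_mk_of_tmul, coinvInducedToRhs_mk_of_tmul]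

/-- Let `N ⊴ G`, `H ≤ G`, and let `M` be a `k[H]`-module. Then `N ∩ H` is normal in `H`,
the quotient `H/(N∩H)` embeds canonically in `G/N`, and there is a natural isomorphism of
`k[G/N]`-modules `(k[G] ⊗_{k[H]} M)_N ≅ k[G/N] ⊗_{k[H/(N∩H)]} M_{N∩H}`, expressed here as
a `k`-linear isomorphism commuting with the (descended) `G`-actions on both sides. -/
theorem coinvariants_induced_equiv_induced_coinvariants :
    (N.subgroupOf H).Normal ∧
    Function.Injective (QuotientGroup.map (N.subgroupOf H) N H.subtype le_rfl) ∧
    ∃ e : CoinvInduced k G N H M ≃ₗ[k] RhsInduced k G N H M,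
      ∀ (g : G) (z : CoinvInduced k G N H M),
        e (lhsSmul k G N H M g z) = rhsSmul k G N H M g (e z) :=
  ⟨Subgroup.normal_subgroupOf, QuotientGroup.map_comap_injective G N H.subtype,
    LinearEquiv.ofLinearMap (coinvInducedToRhs k G N H M) (rhsToCoinvInduced k G N H M)
      (coinvInducedToRhs_comp_rhsToCoinvInduced k G N H M)
      (rhsToCoinvInduced_comp_coinvInducedToRhs k G N H M),
    coinvInducedToRhs_lhsSmul k G N H M⟩

end
end

section
/- Let k be a field, V₀ a finite-dimensional k-vector space, A : V₀ → V₀ a k-linear map, and n ≥ 1 an integer. Let V = V₀ ⊗ V₀ ⊗ ⋯ ⊗ V₀ (the n-fold tensor power over k) and let Φ : V → V be the unique k-linear endomorphism satisfying Φ(v₀ ⊗ v₁ ⊗ ⋯ ⊗ v_{n−1}) = v₁ ⊗ v₂ ⊗ ⋯ ⊗ v_{n−1} ⊗ A(v₀) for all v₀, …, v_{n−1} ∈ V₀. Then trace(Φ : V → V) = trace(A : V₀ → V₀). -/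
/-!
In the basis of pure tensors `b (f 0) ⊗ ⋯ ⊗ b (f N)` built from a basis `b` of `V₀`, the diagonal
entry of `Φ` at `f` is `δ(f 1, f 0) ⋯ δ(f N, f (N-1)) · a (f N) (f 0)`, where `a` is the matrix of
`A`. Only constant `f` survive, and they contribute `∑ c, a c c = trace A`.
-/

open scoped TensorProduct PiTensorProduct

open Module

theorem Fin.forall_succ_eq_castSucc_iff_exists_const {α : Type*} {N : ℕ} (f : Fin (N + 1) → α) :
    (∀ i : Fin N, f i.succ = f i.castSucc) ↔ ∃ c, Function.const _ c = f := by
  refine ⟨fun h => ⟨f 0, funext fun i => ?_⟩, ?_⟩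
  · induction i using Fin.induction with
    | zero => rfl
    | succ i ih => rw [h i, ← ih]; rfl
  · rintro ⟨c, rfl⟩ i
    rfl

theorem Fin.sum_prod_boole_succ_eq_castSucc_mul {R ι : Type*} [CommSemiring R] [Fintype ι]
    [DecidableEq ι] {N : ℕ} (g : (Fin (N + 1) → ι) → R) :
    ∑ f : Fin (N + 1) → ι, (∏ i : Fin N, if f i.succ = f i.castSucc then 1 else 0) * g f =
      ∑ c, g (Function.const _ c) := by
  have hconst :
      Finset.univ.filter (fun f : Fin (N + 1) → ι => ∀ i : Fin N, f i.succ = f i.castSucc) =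
        Finset.univ.image (Function.const _) := by
    ext f
    simp [Fin.forall_succ_eq_castSucc_iff_exists_const]
  simp_rw [Fintype.prod_boole, boole_mul]
  rw [← Finset.sum_image fun c _ d _ h => Function.const_injective h, ← hconst,
    Finset.sum_filter]
  congr! -- the two `Decidable (∀ i, …)` instances differ

theorem LinearMap.trace_eq_sum_repr_apply {R M ι : Type*} [CommRing R] [AddCommGroup M]
    [Module R M] [Fintype ι] [DecidableEq ι] (b : Basis ι R M) (f : M →ₗ[R] M) :
    trace R M f = ∑ i, b.repr (f (b i)) i := by
  simp [trace_eq_matrix_trace R b, Matrix.trace, LinearMap.toMatrix_apply]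

section CyclicShift

variable {R M : Type*} [CommRing R] [AddCommGroup M] [Module R M] {N : ℕ}
  {A : M →ₗ[R] M} {Φ : (⨂[R]^(N + 1) M) →ₗ[R] (⨂[R]^(N + 1) M)}

theorem Basis.piTensorProduct_repr_apply_of_tprod_eq_snoc {ι : Type*} [Fintype ι]
    [DecidableEq ι] (b : Basis ι R M)
    (hΦ : ∀ v : Fin (N + 1) → M,
      Φ (PiTensorProduct.tprod R v) = PiTensorProduct.tprod R (Fin.snoc (Fin.tail v) (A (v 0))))
    (f : Fin (N + 1) → ι) :
    (Basis.piTensorProduct fun _ => b).repr (Φ (Basis.piTensorProduct (fun _ => b) f)) f =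
      (∏ i : Fin N, if f i.succ = f i.castSucc then 1 else 0) *
        b.repr (A (b (f 0))) (f (Fin.last N)) := by
  rw [Basis.piTensorProduct_apply, hΦ, Basis.piTensorProduct_repr_tprod_apply,
    Fin.prod_univ_castSucc]
  simp [Fin.tail, Finsupp.single_apply]

theorem LinearMap.trace_eq_of_tprod_eq_snoc [Module.Free R M] [Module.Finite R M]
    (hΦ : ∀ v : Fin (N + 1) → M,
      Φ (PiTensorProduct.tprod R v) = PiTensorProduct.tprod R (Fin.snoc (Fin.tail v) (A (v 0)))) :
    trace R _ Φ = trace R M A := by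
  classical
  let b := Module.Free.chooseBasis R M
  rw [trace_eq_sum_repr_apply (Basis.piTensorProduct fun _ => b), trace_eq_sum_repr_apply b]
  simp_rw [Basis.piTensorProduct_repr_apply_of_tprod_eq_snoc b hΦ]
  exact Fin.sum_prod_boole_succ_eq_castSucc_mul _

end CyclicShift

/-- Saito–Shintani-type trace identity: if `Φ` is the endomorphism of the `n`-fold tensor
power `V₀ ⊗ ⋯ ⊗ V₀` sending `v₀ ⊗ v₁ ⊗ ⋯ ⊗ v_{n-1}` to `v₁ ⊗ ⋯ ⊗ v_{n-1} ⊗ A v₀`,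
then `trace Φ = trace A`. -/
theorem trace_cyclic_tensor_power
    (k : Type*) [Field k] (V₀ : Type*) [AddCommGroup V₀] [Module k V₀]
    [FiniteDimensional k V₀]
    (A : V₀ →ₗ[k] V₀) (n : ℕ) (hn : 1 ≤ n)
    (Φ : (⨂[k]^n V₀) →ₗ[k] (⨂[k]^n V₀))
    (hΦ : ∀ v : Fin n → V₀,
      Φ (PiTensorProduct.tprod k v) =
        PiTensorProduct.tprod k (fun i : Fin n =>
          if h : (i : ℕ) + 1 < n then v ⟨(i : ℕ) + 1, h⟩ else A (v ⟨0, by omega⟩))) :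
    LinearMap.trace k (⨂[k]^n V₀) Φ = LinearMap.trace k V₀ A := by
  obtain ⟨N, rfl⟩ : ∃ N, n = N + 1 := ⟨n - 1, by omega⟩
  refine LinearMap.trace_eq_of_tprod_eq_snoc fun v =>
    (hΦ v).trans (congrArg _ (funext fun i => ?_))
  induction i using Fin.lastCases with
  | last => simp
  | cast i => simp [Fin.tail, Fin.succ]
end

section
/- Let F be a field and K = F(ϖ) a field extension generated by an element ϖ that is algebraic and separable over F, with minimal polynomial Q ∈ F[u]. Let R be any commutative F-algebra and n ≥ 1 an integer. Then the R-algebra homomorphism R[u] → (R ⊗_F K)[z]/(zⁿ) sending u to z + (1⊗ϖ) maps Qⁿ into the ideal (zⁿ), hence descends to an R-algebra homomorphism R[u]/(Qⁿ) → (R ⊗_F K)[z]/(zⁿ), and this homomorphism is an isomorphism. -/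
/-!
Because `ϖ` is separable, `K/F` is formally étale. In `B = R[u]/(Qⁿ)` the class of `u` is a
root of `Q` modulo the nilpotent ideal `(Q)`, so formal smoothness lifts `K → B/(Q)`, `ϖ ↦ u`,
to `g : K → B` with `g ϖ ≡ u mod (Q)`. Then `r ⊗ k ↦ r · g k`, `z ↦ u - g ϖ` defines a map
`(R ⊗_F K)[z]/(zⁿ) → B`, and it inverts the substitution map: the only nontrivial check is
that the substitution map sends `g k` to `1 ⊗ k`, which holds by formal unramifiedness because
both `F`-algebra maps `K → (R ⊗_F K)[z]/(zⁿ)` agree at `ϖ` modulo the nilpotent ideal `(z)`.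
-/

open scoped TensorProduct

open Polynomial

/-- The substitution homomorphism `R[u] → (R ⊗_F K)[z]/(zⁿ)`, `u ↦ z + 1⊗ϖ`,
before passing to the quotient: `R[u] → (R ⊗_F K)[z]`. -/
noncomputable def substHom (F : Type*) [Field F] {K : Type*} [Field K] [Algebra F K]
    (ϖ : K) (R : Type*) [CommRing R] [Algebra F R] :
    Polynomial R →+* Polynomial (R ⊗[F] K) :=
  Polynomial.eval₂RingHom
    ((Polynomial.C : (R ⊗[F] K) →+* Polynomial (R ⊗[F] K)).comp
      (algebraMap R (R ⊗[F] K)))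
    (Polynomial.X + Polynomial.C ((1 : R) ⊗ₜ[F] ϖ))

theorem Algebra.isSeparable_of_adjoin_singleton_eq_top {F K : Type*} [Field F] [Field K]
    [Algebra F K] {ϖ : K} (hsep : IsSeparable F ϖ) (hgen : Algebra.adjoin F {ϖ} = ⊤) :
    Algebra.IsSeparable F K := by
  have := (IntermediateField.isSeparable_adjoin_simple_iff_isSeparable F K).2 hsep
  have htop : IntermediateField.adjoin F {ϖ} = ⊤ := by
    rw [← IntermediateField.toSubalgebra_inj, IntermediateField.top_toSubalgebra]
    exact top_le_iff.1 (hgen ▸ IntermediateField.algebra_adjoin_le_adjoin F {ϖ})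
  exact Algebra.IsSeparable.of_algHom F _
    ((IntermediateField.equivOfEq htop).trans IntermediateField.topEquiv).symm.toAlgHom

theorem Ideal.isNilpotent_span_singleton {A : Type*} [CommRing A] {x : A} (hx : IsNilpotent x) :
    IsNilpotent (Ideal.span {x}) := by
  obtain ⟨k, hk⟩ := hx
  exact ⟨k, by rw [Ideal.span_singleton_pow, hk]; exact Ideal.span_singleton_eq_bot.2 rfl⟩

theorem Ideal.Quotient.mk_pow_eq_zero_span_pow {A : Type*} [CommRing A] (a : A) (n : ℕ) :
    Ideal.Quotient.mk (Ideal.span {a ^ n}) a ^ n = 0 := by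
  rw [← map_pow, Ideal.Quotient.eq_zero_iff_mem]
  exact Ideal.subset_span rfl

theorem Polynomial.aeval_mk_X {F R : Type*} [CommRing F] [CommRing R] [Algebra F R]
    (I : Ideal R[X]) (p : F[X]) :
    aeval (Ideal.Quotient.mk I X) p = Ideal.Quotient.mk I (p.map (algebraMap F R)) := by
  rw [← Ideal.Quotient.mkₐ_eq_mk F, aeval_algHom_apply, ← aeval_map_algebraMap R,
    aeval_X_left_apply]

theorem X_dvd_aeval_X_add_C_iff {F A : Type*} [CommRing F] [CommRing A] [Algebra F A]
    (p : F[X]) (c : A) : X ∣ aeval (X + C c) p ↔ aeval c p = 0 := by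
  rw [X_dvd_iff, coeff_zero_eq_eval_zero, ← coe_aeval_eq_eval, ← AlgHom.restrictScalars_apply F,
    ← aeval_algHom_apply]
  simp

theorem Algebra.FormallySmooth.exists_algHom_sub_mem_of_aeval_mem {F K A : Type*} [Field F]
    [CommRing K] [Algebra F K] [CommRing A] [Algebra F A] [Algebra.FormallySmooth F K] {ϖ : K}
    (hϖ : IsIntegral F ϖ) (hgen : Algebra.adjoin F {ϖ} = ⊤) {I : Ideal A} (hI : IsNilpotent I)
    {b : A} (hb : aeval b (minpoly F ϖ) ∈ I) : ∃ g : K →ₐ[F] A, b - g ϖ ∈ I := by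
  let pb := PowerBasis.ofAdjoinEqTop hϖ hgen
  have hroot : aeval (Ideal.Quotient.mk I b) (minpoly F pb.gen) = 0 := by
    rw [PowerBasis.ofAdjoinEqTop_gen, ← Ideal.Quotient.mkₐ_eq_mk F, aeval_algHom_apply,
      Ideal.Quotient.mkₐ_eq_mk, Ideal.Quotient.eq_zero_iff_mem]
    exact hb
  refine ⟨Algebra.FormallySmooth.lift I hI (pb.lift _ hroot), ?_⟩
  rw [← Ideal.Quotient.eq, Algebra.FormallySmooth.mk_lift]
  exact (pb.lift_gen _ hroot).symm

theorem Algebra.FormallyUnramified.algHom_eq_of_sub_mem {F K A : Type*} [CommRing F]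
    [CommRing K] [Algebra F K] [CommRing A] [Algebra F A] [Algebra.FormallyUnramified F K] {ϖ : K}
    (hgen : Algebra.adjoin F {ϖ} = ⊤) {I : Ideal A} (hI : IsNilpotent I) {g₁ g₂ : K →ₐ[F] A}
    (h : g₁ ϖ - g₂ ϖ ∈ I) : g₁ = g₂ :=
  Algebra.FormallyUnramified.lift_unique I hI g₁ g₂ <| AlgHom.ext_of_adjoin_eq_top hgen <| by
    rintro _ rfl
    simpa [Ideal.Quotient.eq] using h

section Descent

variable (F : Type*) [Field F] {K : Type*} [Field K] [Algebra F K] (ϖ : K)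
  (R : Type*) [CommRing R] [Algebra F R] (n : ℕ)

local notation "𝒬" => Polynomial.map (algebraMap F R) (minpoly F ϖ)
local notation "𝔅" => R[X] ⧸ Ideal.span {𝒬 ^ n}
local notation "𝔖" => (R ⊗[F] K)[X] ⧸ Ideal.span {(X : (R ⊗[F] K)[X]) ^ n}

theorem substHom_eq_aeval (p : R[X]) :
    substHom F ϖ R p = aeval (X + C ((1 : R) ⊗ₜ[F] ϖ)) p :=
  rfl

theorem substHom_map (p : F[X]) :
    substHom F ϖ R (p.map (algebraMap F R)) = aeval (X + C ((1 : R) ⊗ₜ[F] ϖ)) p := by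
  rw [substHom_eq_aeval, aeval_map_algebraMap]

theorem X_dvd_substHom_map_minpoly :
    X ∣ substHom F ϖ R ((minpoly F ϖ).map (algebraMap F R)) := by
  rw [substHom_map, X_dvd_aeval_X_add_C_iff, ← Algebra.TensorProduct.includeRight_apply,
    aeval_algHom_apply, minpoly.aeval, map_zero]

theorem substHom_map_minpoly_pow_mem :
    substHom F ϖ R ((minpoly F ϖ).map (algebraMap F R) ^ n) ∈
      Ideal.span {(X : (R ⊗[F] K)[X]) ^ n} := by
  rw [map_pow, Ideal.mem_span_singleton]
  exact pow_dvd_pow_of_dvd (X_dvd_substHom_map_minpoly F ϖ R) n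

theorem span_map_minpoly_pow_le_comap_substHom :
    Ideal.span {𝒬 ^ n} ≤ (Ideal.span {(X : (R ⊗[F] K)[X]) ^ n}).comap (substHom F ϖ R) :=
  (Ideal.span_singleton_le_iff_mem _).2 (substHom_map_minpoly_pow_mem F ϖ R n)

noncomputable def descentAlgHom : 𝔅 →ₐ[R] 𝔖 :=
  Ideal.quotientMapₐ _ (aeval (X + C (1 ⊗ₜ[F] ϖ)) : R[X] →ₐ[R] (R ⊗[F] K)[X])
    (span_map_minpoly_pow_le_comap_substHom F ϖ R n)

variable {F ϖ R n}

noncomputable def descentAlgHomInv (g : K →ₐ[F] 𝔅)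
    (hg : Ideal.Quotient.mk _ 𝒬 ∣ Ideal.Quotient.mk _ X - g ϖ) : 𝔖 →ₐ[R] 𝔅 :=
  Ideal.Quotient.liftₐ _
    (eval₂AlgHom (Algebra.TensorProduct.productLeftAlgHom (Algebra.ofId R _) g)
      (Ideal.Quotient.mk _ X - g ϖ) fun _ ↦ Commute.all _ _) <| by
    intro a ha
    obtain ⟨c, rfl⟩ := Ideal.mem_span_singleton'.1 ha
    have hpow : (Ideal.Quotient.mk _ X - g ϖ) ^ n = 0 := zero_dvd_iff.1 <|
      Ideal.Quotient.mk_pow_eq_zero_span_pow 𝒬 n ▸ pow_dvd_pow_of_dvd hg n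
    rw [map_mul, map_pow, eval₂AlgHom_apply _ _ _ X, eval₂_X, hpow, mul_zero]

@[simp]
theorem descentAlgHom_mk (p : R[X]) :
    descentAlgHom F ϖ R n (Ideal.Quotient.mk _ p) =
      Ideal.Quotient.mk _ (aeval (X + C ((1 : R) ⊗ₜ[F] ϖ)) p) :=
  rfl

theorem descentAlgHom_mk_X :
    descentAlgHom F ϖ R n (Ideal.Quotient.mk _ X) =
      Ideal.Quotient.mk _ X + Ideal.Quotient.mk _ (C ((1 : R) ⊗ₜ[F] ϖ)) := by
  rw [descentAlgHom_mk, aeval_X, map_add]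

@[simp]
theorem descentAlgHomInv_mk_X (g : K →ₐ[F] 𝔅)
    (hg : Ideal.Quotient.mk _ 𝒬 ∣ Ideal.Quotient.mk _ X - g ϖ) :
    descentAlgHomInv g hg (Ideal.Quotient.mk _ X) = Ideal.Quotient.mk _ X - g ϖ :=
  eval₂_X _ _

@[simp]
theorem descentAlgHomInv_mk_C (g : K →ₐ[F] 𝔅)
    (hg : Ideal.Quotient.mk _ 𝒬 ∣ Ideal.Quotient.mk _ X - g ϖ) (r : R) (k : K) :
    descentAlgHomInv g hg (Ideal.Quotient.mk _ (C (r ⊗ₜ k))) = algebraMap R 𝔅 r * g k :=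
  (eval₂_C _ _).trans (by simp)

theorem descentAlgHomInv_comp_descentAlgHom (g : K →ₐ[F] 𝔅)
    (hg : Ideal.Quotient.mk _ 𝒬 ∣ Ideal.Quotient.mk _ X - g ϖ) :
    (descentAlgHomInv g hg).comp (descentAlgHom F ϖ R n) = AlgHom.id R 𝔅 := by
  apply Ideal.Quotient.algHom_ext
  apply Polynomial.algHom_ext
  simp only [AlgHom.comp_apply, Ideal.Quotient.mkₐ_eq_mk, descentAlgHom_mk_X, map_add,
    descentAlgHomInv_mk_X, descentAlgHomInv_mk_C, map_one, one_mul, AlgHom.id_apply, sub_add_cancel]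

theorem descentAlgHom_mk_minpoly_dvd :
    Ideal.Quotient.mk _ X ∣ descentAlgHom F ϖ R n (Ideal.Quotient.mk _ 𝒬) := by
  rw [descentAlgHom_mk, ← substHom_eq_aeval]
  exact map_dvd (Ideal.Quotient.mk _) (X_dvd_substHom_map_minpoly F ϖ R)

theorem descentAlgHom_comp_algHom [Algebra.FormallyUnramified F K]
    (hgen : Algebra.adjoin F {ϖ} = ⊤) (g : K →ₐ[F] 𝔅)
    (hg : Ideal.Quotient.mk _ 𝒬 ∣ Ideal.Quotient.mk _ X - g ϖ) :
    ((descentAlgHom F ϖ R n).restrictScalars F).comp g =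
      ((Ideal.Quotient.mkₐ F _).comp CAlgHom).comp Algebra.TensorProduct.includeRight := by
  refine Algebra.FormallyUnramified.algHom_eq_of_sub_mem hgen
    (Ideal.isNilpotent_span_singleton ⟨n, Ideal.Quotient.mk_pow_eq_zero_span_pow X n⟩) ?_
  obtain ⟨c, hc⟩ := hg
  have hdiff : descentAlgHom F ϖ R n (g ϖ) - Ideal.Quotient.mk _ (C ((1 : R) ⊗ₜ[F] ϖ)) =
      Ideal.Quotient.mk _ X -
        descentAlgHom F ϖ R n (Ideal.Quotient.mk _ 𝒬) * descentAlgHom F ϖ R n c := by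
    rw [← map_mul, ← hc, map_sub, descentAlgHom_mk_X]
    ring
  simp only [AlgHom.comp_apply, AlgHom.restrictScalars_apply, Ideal.Quotient.mkₐ_eq_mk,
    CAlgHom_apply, Algebra.TensorProduct.includeRight_apply]
  rw [hdiff]
  exact Ideal.mem_span_singleton.2
    (dvd_sub dvd_rfl (dvd_mul_of_dvd_left descentAlgHom_mk_minpoly_dvd _))

theorem descentAlgHom_comp_descentAlgHomInv [Algebra.FormallyUnramified F K]
    (hgen : Algebra.adjoin F {ϖ} = ⊤) (g : K →ₐ[F] 𝔅)
    (hg : Ideal.Quotient.mk _ 𝒬 ∣ Ideal.Quotient.mk _ X - g ϖ) :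
    (descentAlgHom F ϖ R n).comp (descentAlgHomInv g hg) = AlgHom.id R 𝔖 := by
  have hK (k : K) : descentAlgHom F ϖ R n (g k) = Ideal.Quotient.mk _ (C ((1 : R) ⊗ₜ[F] k)) :=
    AlgHom.congr_fun (descentAlgHom_comp_algHom hgen g hg) k
  apply Ideal.Quotient.algHom_ext
  apply Polynomial.algHom_ext'
  · apply Algebra.TensorProduct.ext (Subsingleton.elim _ _)
    ext k
    simpa using hK k
  · simp only [AlgHom.comp_apply, Ideal.Quotient.mkₐ_eq_mk, descentAlgHomInv_mk_X, map_sub,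
      descentAlgHom_mk_X]
    rw [hK, add_sub_cancel_right, AlgHom.id_apply]

end Descent

theorem substHom_descends_and_bijective_general
    (F : Type*) [Field F] (K : Type*) [Field K] [Algebra F K] (ϖ : K)
    (hsep : IsSeparable F ϖ)
    (hgen : Algebra.adjoin F ({ϖ} : Set K) = ⊤)
    (R : Type*) [CommRing R] [Algebra F R] (n : ℕ) :
    substHom F ϖ R (((minpoly F ϖ).map (algebraMap F R)) ^ n) ∈
        Ideal.span ({(Polynomial.X : Polynomial (R ⊗[F] K)) ^ n} : Set _) ∧
      ∃ h0 : ∀ a ∈ Ideal.span ({((minpoly F ϖ).map (algebraMap F R)) ^ n} :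
            Set (Polynomial R)),
          ((Ideal.Quotient.mk (Ideal.span
              ({(Polynomial.X : Polynomial (R ⊗[F] K)) ^ n} : Set _))).comp
            (substHom F ϖ R)) a = 0,
        Function.Bijective
          (Ideal.Quotient.lift
            (Ideal.span ({((minpoly F ϖ).map (algebraMap F R)) ^ n} : Set (Polynomial R)))
            ((Ideal.Quotient.mk (Ideal.span
                ({(Polynomial.X : Polynomial (R ⊗[F] K)) ^ n} : Set _))).comp
              (substHom F ϖ R))
            h0) := by
  have : Algebra.IsSeparable F K := Algebra.isSeparable_of_adjoin_singleton_eq_top hsep hgen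
  have : Algebra.FormallyEtale F K := Algebra.FormallyEtale.of_isSeparable F K
  have hmem := substHom_map_minpoly_pow_mem F ϖ R n
  obtain ⟨g, hg⟩ := Algebra.FormallySmooth.exists_algHom_sub_mem_of_aeval_mem
    (A := R[X] ⧸ Ideal.span {(minpoly F ϖ).map (algebraMap F R) ^ n}) hsep.isIntegral hgen
    (Ideal.isNilpotent_span_singleton ⟨n, Ideal.Quotient.mk_pow_eq_zero_span_pow _ n⟩)
    (Ideal.subset_span (aeval_mk_X _ _))
  have hg' := Ideal.mem_span_singleton.1 hg
  refine ⟨hmem, fun a ha ↦ Ideal.Quotient.eq_zero_iff_mem.2 ?_, ?_⟩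
  · exact span_map_minpoly_pow_le_comap_substHom F ϖ R n ha
  -- `descentAlgHom` is, definitionally, the descended map of the statement.
  · exact (AlgEquiv.ofAlgHom _ _ (descentAlgHom_comp_descentAlgHomInv hgen g hg')
      (descentAlgHomInv_comp_descentAlgHom g hg')).bijective

/-- Let `K = F(ϖ)` with `ϖ` algebraic and separable over `F`, with minimal polynomial
`Q ∈ F[u]`. For any commutative `F`-algebra `R` and `n ≥ 1`, the `R`-algebra map
`R[u] → (R ⊗_F K)[z]/(zⁿ)`, `u ↦ z + 1⊗ϖ`, kills `Qⁿ`, hence descends to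
`R[u]/(Qⁿ) → (R ⊗_F K)[z]/(zⁿ)`, and the descended homomorphism is an isomorphism. -/
theorem substHom_descends_and_bijective
    (F : Type*) [Field F] (K : Type*) [Field K] [Algebra F K] (ϖ : K)
    (halg : IsIntegral F ϖ) (hsep : IsSeparable F ϖ)
    (hgen : Algebra.adjoin F ({ϖ} : Set K) = ⊤)
    (R : Type*) [CommRing R] [Algebra F R] (n : ℕ) (hn : 1 ≤ n) :
    substHom F ϖ R (((minpoly F ϖ).map (algebraMap F R)) ^ n) ∈
        Ideal.span ({(Polynomial.X : Polynomial (R ⊗[F] K)) ^ n} : Set _) ∧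
      ∃ h0 : ∀ a ∈ Ideal.span ({((minpoly F ϖ).map (algebraMap F R)) ^ n} :
            Set (Polynomial R)),
          ((Ideal.Quotient.mk (Ideal.span
              ({(Polynomial.X : Polynomial (R ⊗[F] K)) ^ n} : Set _))).comp
            (substHom F ϖ R)) a = 0,
        Function.Bijective
          (Ideal.Quotient.lift
            (Ideal.span ({((minpoly F ϖ).map (algebraMap F R)) ^ n} : Set (Polynomial R)))
            ((Ideal.Quotient.mk (Ideal.span
                ({(Polynomial.X : Polynomial (R ⊗[F] K)) ^ n} : Set _))).comp
              (substHom F ϖ R))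
            h0) :=
  substHom_descends_and_bijective_general F K ϖ hsep hgen R n
end

section
/- Let F be a field and K = F(ϖ) a field extension generated by an element ϖ that is algebraic and separable over F, with minimal polynomial Q ∈ F[u]. Then the (Q)-adic completion of the polynomial ring F[u], namely the inverse limit lim_n F[u]/(Qⁿ) along the natural projections, is isomorphic as an F-algebra to the formal power series ring K⟦z⟧. -/
/-!
Substituting `u ↦ ϖ + z` gives a ring map `φ : F[u] → K⟦z⟧` with `φ(p)(0) = p(ϖ)` and
`φ(p)'(0) = p'(ϖ)`. Since `Q(ϖ) = 0 ≠ Q'(ϖ)`, `φ(Q)` is `z` times a unit, so `(Qⁿ)` is exactly the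
preimage of `(zⁿ)`; since `F[ϖ] = K`, `φ` is surjective modulo `z`, hence by successive
approximation modulo every `zⁿ`. So `F[u]/(Qⁿ) ≅ K⟦z⟧/(zⁿ)` compatibly in `n`, and the limit of
the right-hand sides is `K⟦z⟧`, which is `z`-adically complete.
-/

open Polynomial

section

variable {R S : Type*} [CommRing R] [CommRing S]

namespace Ideal

theorem comap_span_singleton_pow [IsDomain S] (f : R →+* S) {a : R} (ha : f a ≠ 0)
    (h : (span {f a}).comap f = span {a}) (n : ℕ) :
    (span {f a} ^ n).comap f = span {a} ^ n := by
  ext p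
  simp only [mem_comap, span_singleton_pow, mem_span_singleton, ← map_pow]
  induction n generalizing p with
  | zero => simp
  | succ n ih =>
    refine ⟨fun hp => ?_, map_dvd f⟩
    obtain ⟨t, rfl⟩ : a ∣ p := by
      rw [← mem_span_singleton, ← h, mem_comap, mem_span_singleton]
      exact (dvd_pow_self _ n.succ_ne_zero).trans (map_pow f a _ ▸ hp)
    rw [pow_succ', map_mul, map_mul] at hp
    rw [pow_succ']
    exact mul_dvd_mul_left a ((ih t).mp ((mul_dvd_mul_iff_left ha).mp hp))

theorem surjective_mk_span_singleton_pow_comp (f : R →+* S) (a : R)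
    (h : Function.Surjective ((Quotient.mk (span {f a})).comp f)) (n : ℕ) :
    Function.Surjective ((Quotient.mk (span {f a} ^ n)).comp f) := by
  suffices ∀ s, ∃ p, f a ^ n ∣ s - f p by
    intro y
    obtain ⟨s, rfl⟩ := Quotient.mk_surjective y
    obtain ⟨p, hp⟩ := this s
    refine ⟨p, Quotient.eq.mpr ?_⟩
    rw [span_singleton_pow, mem_span_singleton, ← dvd_neg, neg_sub]
    exact hp
  induction n with
  | zero => simp
  | succ n ih =>
    intro s
    obtain ⟨p, t, ht⟩ := ih s
    obtain ⟨q, hq⟩ := h (Quotient.mk _ t)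
    obtain ⟨u, hu⟩ := mem_span_singleton'.mp (Quotient.eq.mp hq)
    refine ⟨p + a ^ n * q, -u, ?_⟩
    rw [map_add, map_mul, map_pow]
    linear_combination ht + f a ^ n * hu

theorem exists_quotientEquiv_of_comap_eq_of_surjective {I : Ideal R} {J : Ideal S} (f : R →+* S)
    (hcomap : J.comap f = I) (hsurj : Function.Surjective ((Quotient.mk J).comp f)) :
    ∃ e : R ⧸ I ≃+* S ⧸ J, ∀ r, e (Quotient.mk I r) = Quotient.mk J (f r) := by
  have hker : RingHom.ker ((Quotient.mk J).comp f) = I := by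
    rw [← RingHom.comap_ker, mk_ker, hcomap]
  exact ⟨(quotEquivOfEq hker.symm).trans (RingHom.quotientKerEquivOfSurjective hsurj),
    fun _ => rfl⟩

end Ideal

namespace AdicCompletion

theorem factorPow_evalₐ (I : Ideal R) {m n : ℕ} (hle : m ≤ n) (x : AdicCompletion I R) :
    Ideal.Quotient.factorPow I hle (evalₐ I n x) = evalₐ I m x := by
  induction x using induction_on with
  | h f =>
    rw [evalₐ_mk, evalₐ_mk, Ideal.Quotient.factor_mk, Ideal.Quotient.eq]
    have hf := AdicCauchySequence.mk_eq_mk hle f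
    rw [Submodule.Quotient.eq] at hf
    simpa using hf

theorem exists_ringEquiv_of_comap_pow {I : Ideal R} {J : Ideal S} [IsAdicComplete J S]
    (f : R →+* S) (hcomap : ∀ n, (J ^ n).comap f = I ^ n)
    (hsurj : ∀ n, Function.Surjective ((Ideal.Quotient.mk (J ^ n)).comp f)) :
    ∃ e : AdicCompletion I R ≃+* S, ∀ r, e (algebraMap R _ r) = f r := by
  choose e he using fun n =>
    Ideal.exists_quotientEquiv_of_comap_eq_of_surjective f (hcomap n) (hsurj n)
  have factorPow_e : ∀ {m n} (hle : m ≤ n) (y : R ⧸ I ^ n),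
      Ideal.Quotient.factorPow J hle (e n y) = e m (Ideal.Quotient.factorPow I hle y) := by
    intro m n hle y
    obtain ⟨r, rfl⟩ := Ideal.Quotient.mk_surjective y
    simp [he]
  let toS : AdicCompletion I R →+* S := IsAdicComplete.liftRingHom J
    (fun n => (e n : R ⧸ I ^ n →+* S ⧸ J ^ n).comp (evalₐ I n))
    (fun hle => by ext x; simp [factorPow_e, factorPow_evalₐ])
  let ofS : S →+* AdicCompletion I R := liftRingHom I
    (fun n => ((e n).symm : S ⧸ J ^ n →+* R ⧸ I ^ n).comp (Ideal.Quotient.mk (J ^ n)))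
    (fun hle => by ext s; apply (e _).injective; simp [← factorPow_e])
  have mk_toS : ∀ n x, Ideal.Quotient.mk (J ^ n) (toS x) = e n (evalₐ I n x) :=
    fun _ _ => IsAdicComplete.mk_liftRingHom ..
  have evalₐ_ofS : ∀ n s, evalₐ I n (ofS s) = (e n).symm (Ideal.Quotient.mk (J ^ n) s) :=
    fun _ _ => evalₐ_liftRingHom ..
  refine ⟨{ toS with
    invFun := ofS
    left_inv := fun x => ext_evalₐ fun n => by simp [evalₐ_ofS, mk_toS]
    right_inv := congrFun (IsHausdorff.funext' J (f := toS ∘ ofS) (g := id)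
      fun n s => by simp [mk_toS, evalₐ_ofS]) }, ?_⟩
  exact congrFun (IsHausdorff.funext' J (f := toS ∘ algebraMap R _) (g := f)
    fun n r => by simp [mk_toS, algebraMap_apply, he])

end AdicCompletion

end

namespace Polynomial

section

variable {R A : Type*} [CommRing R] [CommRing A] [Algebra R A]

noncomputable def toPowerSeriesAt (x : A) : R[X] →+* PowerSeries A :=
  coeToPowerSeries.ringHom.comp ((taylorAlgHom x).toRingHom.comp (mapRingHom (algebraMap R A)))

variable (x : A)

theorem toPowerSeriesAt_apply (p : R[X]) :
    toPowerSeriesAt x p = (taylor x (p.map (algebraMap R A)) : PowerSeries A) := rfl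

@[simp]
theorem toPowerSeriesAt_C (r : R) :
    toPowerSeriesAt x (C r) = PowerSeries.C (algebraMap R A r) := by
  simp [toPowerSeriesAt_apply]

theorem constantCoeff_toPowerSeriesAt (p : R[X]) :
    PowerSeries.constantCoeff (toPowerSeriesAt x p) = aeval x p := by
  rw [← PowerSeries.coeff_zero_eq_constantCoeff_apply, toPowerSeriesAt_apply, coeff_coe,
    taylor_coeff_zero, eval_map_algebraMap]

theorem coeff_one_toPowerSeriesAt (p : R[X]) :
    PowerSeries.coeff 1 (toPowerSeriesAt x p) = aeval x (derivative p) := by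
  rw [toPowerSeriesAt_apply, coeff_coe, taylor_coeff_one, derivative_map, eval_map_algebraMap]

theorem X_dvd_toPowerSeriesAt_iff (p : R[X]) :
    PowerSeries.X ∣ toPowerSeriesAt x p ↔ aeval x p = 0 := by
  rw [PowerSeries.X_dvd_iff, constantCoeff_toPowerSeriesAt]

theorem surjective_mk_span_X_comp_toPowerSeriesAt (hx : Algebra.adjoin R {x} = ⊤) :
    Function.Surjective
      ((Ideal.Quotient.mk (Ideal.span {PowerSeries.X})).comp (toPowerSeriesAt (R := R) x)) := by
  intro y
  obtain ⟨s, rfl⟩ := Ideal.Quotient.mk_surjective y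
  obtain ⟨p, hp⟩ : PowerSeries.constantCoeff s ∈ (aeval x : R[X] →ₐ[R] A).range := by
    rw [← Algebra.adjoin_singleton_eq_range_aeval, hx]
    exact Algebra.mem_top
  refine ⟨p, Ideal.Quotient.eq.mpr (Ideal.mem_span_singleton.mpr ?_)⟩
  rw [PowerSeries.X_dvd_iff, map_sub, constantCoeff_toPowerSeriesAt, ← hp]
  exact sub_self _

end

theorem comap_span_X_toPowerSeriesAt {F A : Type*} [Field F] [CommRing A] [Algebra F A] (x : A) :
    (Ideal.span {PowerSeries.X}).comap (toPowerSeriesAt x) = Ideal.span {minpoly F x} := by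
  ext p
  rw [Ideal.mem_comap, Ideal.mem_span_singleton, Ideal.mem_span_singleton,
    X_dvd_toPowerSeriesAt_iff, minpoly.dvd_iff]

theorem associated_toPowerSeriesAt_minpoly {F K : Type*} [Field F] [Field K] [Algebra F K] {x : K}
    (hx : IsSeparable F x) : Associated (toPowerSeriesAt x (minpoly F x)) PowerSeries.X := by
  obtain ⟨w, hw⟩ := (X_dvd_toPowerSeriesAt_iff x _).mpr (minpoly.aeval F x)
  have hw0 : PowerSeries.constantCoeff w ≠ 0 := by
    rw [← PowerSeries.coeff_zero_eq_constantCoeff_apply, ← PowerSeries.coeff_succ_X_mul, ← hw,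
      coeff_one_toPowerSeriesAt]
    exact hx.aeval_derivative_ne_zero (minpoly.aeval F x)
  rw [hw]
  exact (associated_mul_unit_right _ _ (PowerSeries.isUnit_iff_constantCoeff.mpr hw0.isUnit)).symm

end Polynomial

theorem adicCompletion_polynomial_equiv_powerSeries_general
    (F : Type*) [Field F] (K : Type*) [Field K] [Algebra F K] (ϖ : K)
    (hsep : IsSeparable F ϖ)
    (hgen : Algebra.adjoin F ({ϖ} : Set K) = ⊤) :
    ∃ e : AdicCompletion (Ideal.span {minpoly F ϖ}) (Polynomial F) ≃+* PowerSeries K,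
      ∀ a : F,
        e (algebraMap (Polynomial F)
            (AdicCompletion (Ideal.span {minpoly F ϖ}) (Polynomial F)) (Polynomial.C a)) =
          PowerSeries.C (R := K) (algebraMap F K a) := by
  set φ : F[X] →+* PowerSeries K := toPowerSeriesAt ϖ
  have hassoc := associated_toPowerSeriesAt_minpoly hsep
  have hspan : Ideal.span {φ (minpoly F ϖ)} = Ideal.span {PowerSeries.X} :=
    Ideal.span_singleton_eq_span_singleton.mpr hassoc
  have hne : φ (minpoly F ϖ) ≠ 0 := hassoc.ne_zero_iff.mpr PowerSeries.X_ne_zero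
  have hcomap := comap_span_X_toPowerSeriesAt (F := F) ϖ
  have hsurj := surjective_mk_span_X_comp_toPowerSeriesAt (R := F) ϖ hgen
  rw [← hspan] at hcomap hsurj
  obtain ⟨e, he⟩ := AdicCompletion.exists_ringEquiv_of_comap_pow (J := Ideal.span {PowerSeries.X}) φ
    (fun n => hspan ▸ Ideal.comap_span_singleton_pow φ hne hcomap n)
    (fun n => hspan ▸ Ideal.surjective_mk_span_singleton_pow_comp φ _ hsurj n)
  exact ⟨e, fun a => by rw [he, toPowerSeriesAt_C]⟩

/-- Let `K = F(ϖ)` with `ϖ` algebraic and separable over `F`, with minimal polynomial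
`Q ∈ F[u]`. Then the `(Q)`-adic completion of `F[u]`, i.e. the inverse limit
`lim_n F[u]/(Qⁿ)`, is isomorphic as an `F`-algebra to the power series ring `K⟦z⟧`. -/
theorem adicCompletion_polynomial_equiv_powerSeries
    (F : Type*) [Field F] (K : Type*) [Field K] [Algebra F K] (ϖ : K)
    (halg : IsIntegral F ϖ) (hsep : IsSeparable F ϖ)
    (hgen : Algebra.adjoin F ({ϖ} : Set K) = ⊤) :
    ∃ e : AdicCompletion (Ideal.span {minpoly F ϖ}) (Polynomial F) ≃+* PowerSeries K,
      ∀ a : F,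
        e (algebraMap (Polynomial F)
            (AdicCompletion (Ideal.span {minpoly F ϖ}) (Polynomial F)) (Polynomial.C a)) =
          PowerSeries.C (R := K) (algebraMap F K a) :=
  adicCompletion_polynomial_equiv_powerSeries_general F K ϖ hsep hgen
end
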